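/- arXiv:2412.20094 — 3 statements merged into one kernel-verified Lean document; each statement's English description precedes it below -/
import Mathlib

section
/- Let H₋₁, H₀, H₁, H₂ be Hilbert spaces. (a) If (T_n)_{n∈ℕ} is a sequence of continuous linear operators from H₁ to H₂ converging strongly to a continuous linear operator T, and 𝒦 is a collectively compact family of continuous linear operators from H₀ to H₁, then the family {T_n ∘ K : n ∈ ℕ, K ∈ 𝒦} is collectively compact as a family of operators from H₀ to H₂. (b) If (S_n)_{n∈ℕ} is a sequence of continuous linear operators from H₋₁ to H₀ converging strongly to a continuous linear operator S, then the family {K ∘ S_n : n ∈ ℕ, K ∈ 𝒦} is collectively compact as a family of operators from H₋₁ to H₁. -/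
/-!
By Banach–Steinhaus a strongly convergent sequence of operators on a Banach space is uniformly
bounded, hence equicontinuous, so by Ascoli it converges uniformly on the compact closure of
`A = {K x : K ∈ 𝒦, ‖x‖ ≤ 1}`. Past some index `N` every `T n (K x)` is therefore close to
`T₀ '' A`, and the finitely many earlier `T n '' A` are totally bounded.
For the right composition, `‖S n‖ ≤ C` puts every `K (S n x)` in `{K y : ‖y‖ ≤ C}`, a rescaling
of `A`.
-/

open Filter Topology

theorem TendstoUniformlyOn.totallyBounded_iUnion_image {α β : Type*} [UniformSpace β]
    {F : ℕ → α → β} {f : α → β} {s : Set α} (h : TendstoUniformlyOn F f atTop s)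
    (hF : ∀ n, TotallyBounded (F n '' s)) (hf : TotallyBounded (f '' s)) :
    TotallyBounded (⋃ n, F n '' s) := by
  intro V hV
  obtain ⟨W, hW, hWsymm, hWV⟩ := comp_symm_mem_uniformity_sets hV
  obtain ⟨N, hN⟩ := eventually_atTop.1 (h W hW)
  obtain ⟨t, ht, hft⟩ := hf W hW
  obtain ⟨u, hu, hFu⟩ := ((totallyBounded_biUnion (Set.finite_Iio N)).2 fun n _ => hF n) V hV
  refine ⟨t ∪ u, ht.union hu, ?_⟩
  rintro _ ⟨_, ⟨n, rfl⟩, x, hx, rfl⟩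
  rw [Set.biUnion_union]
  rcases lt_or_ge n N with hn | hn
  · exact Or.inr (hFu (Set.mem_biUnion hn ⟨x, hx, rfl⟩))
  · obtain ⟨y, hy, hxy⟩ := Set.mem_iUnion₂.1 (hft ⟨x, hx, rfl⟩)
    exact Or.inl <| Set.mem_biUnion hy <|
      hWV (SetRel.prodMk_mem_comp (SetRel.symm W (hN n hn x hx)) hxy)

namespace ContinuousLinearMap

variable {𝕜 𝕜₂ E F : Type*} [NontriviallyNormedField 𝕜] [NontriviallyNormedField 𝕜₂]
  {σ : 𝕜 →+* 𝕜₂} [RingHomIsometric σ] [SeminormedAddCommGroup E] [SeminormedAddCommGroup F]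
  [NormedSpace 𝕜 E] [NormedSpace 𝕜₂ F] [CompleteSpace E]
  {T : ℕ → E →SL[σ] F} {f : E → F}

theorem exists_norm_le_of_tendsto (h : ∀ x, Tendsto (fun n => T n x) atTop (𝓝 (f x))) :
    ∃ C, ∀ n, ‖T n‖ ≤ C :=
  banach_steinhaus fun x =>
    let ⟨C, hC⟩ := (h x).norm.bddAbove_range
    ⟨C, fun n => hC ⟨n, rfl⟩⟩

theorem tendstoUniformlyOn_of_tendsto (h : ∀ x, Tendsto (fun n => T n x) atTop (𝓝 (f x)))
    {s : Set E} (hs : TotallyBounded s) : TendstoUniformlyOn (fun n => ⇑(T n)) f atTop s := by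
  have heq : Equicontinuous fun n => ⇑(T n) :=
    ((NormedSpace.equicontinuous_TFAE T).out 5 1).1 (exists_norm_le_of_tendsto h)
  have hK : IsCompact (closure s) := hs.closure.isCompact_of_isClosed isClosed_closure
  have hunif := (EquicontinuousOn.tendsto_uniformOnFun_iff_pi' (𝔖 := {closure s}) (by simpa)
    (by simpa using heq.equicontinuousOn _) atTop f).2 (tendsto_pi_nhds.2 fun x => h x)
  rw [UniformOnFun.tendsto_iff_tendstoUniformlyOn] at hunif
  exact (hunif _ rfl).mono subset_closure

end ContinuousLinearMap

theorem totallyBounded_apply_of_norm_le {𝕜 E F : Type*} [NontriviallyNormedField 𝕜]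
    [SeminormedAddCommGroup E] [NormedSpace 𝕜 E] [SeminormedAddCommGroup F] [NormedSpace 𝕜 F]
    {𝒦 : Set (E →L[𝕜] F)} (h : TotallyBounded {y | ∃ K ∈ 𝒦, ∃ x : E, ‖x‖ ≤ 1 ∧ y = K x})
    (r : ℝ) : TotallyBounded {y | ∃ K ∈ 𝒦, ∃ x : E, ‖x‖ ≤ r ∧ y = K x} := by
  obtain ⟨c, hc⟩ := NormedField.exists_lt_norm 𝕜 r
  refine (h.image (uniformContinuous_const_smul c)).subset ?_
  rintro _ ⟨K, hK, x, hx, rfl⟩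
  have hc0 : c ≠ 0 := norm_pos_iff.1 ((norm_nonneg x).trans_lt (hx.trans_lt hc))
  refine ⟨K (c⁻¹ • x), ⟨K, hK, c⁻¹ • x, ?_, rfl⟩, ?_⟩
  · rw [norm_smul, norm_inv, inv_mul_le_one₀ (norm_pos_iff.2 hc0)]
    exact hx.trans hc.le
  · simp only [map_smul, smul_inv_smul₀ hc0]

theorem comp_collectively_compact_general
    {Hm1 H₀ H₁ H₂ : Type*}
    [NormedAddCommGroup Hm1] [InnerProductSpace ℂ Hm1] [CompleteSpace Hm1]
    [NormedAddCommGroup H₀] [InnerProductSpace ℂ H₀]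
    [NormedAddCommGroup H₁] [InnerProductSpace ℂ H₁] [CompleteSpace H₁]
    [NormedAddCommGroup H₂] [InnerProductSpace ℂ H₂]
    (𝒦 : Set (H₀ →L[ℂ] H₁))
    (hcc : TotallyBounded {y : H₁ | ∃ K ∈ 𝒦, ∃ x : H₀, ‖x‖ ≤ 1 ∧ y = K x})
    (T : ℕ → H₁ →L[ℂ] H₂) (T₀ : H₁ →L[ℂ] H₂)
    (hT : ∀ x : H₁, Tendsto (fun n => ‖T n x - T₀ x‖) atTop (nhds 0))
    (S : ℕ → Hm1 →L[ℂ] H₀) (S₀ : Hm1 →L[ℂ] H₀)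
    (hS : ∀ x : Hm1, Tendsto (fun n => ‖S n x - S₀ x‖) atTop (nhds 0)) :
    TotallyBounded {y : H₂ | ∃ n : ℕ, ∃ K ∈ 𝒦, ∃ x : H₀, ‖x‖ ≤ 1 ∧ y = T n (K x)} ∧
    TotallyBounded {y : H₁ | ∃ n : ℕ, ∃ K ∈ 𝒦, ∃ x : Hm1, ‖x‖ ≤ 1 ∧ y = K (S n x)} := by
  set A := {y : H₁ | ∃ K ∈ 𝒦, ∃ x : H₀, ‖x‖ ≤ 1 ∧ y = K x}
  constructor
  · refine TotallyBounded.subset ?_ <| (ContinuousLinearMap.tendstoUniformlyOn_of_tendsto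
      (fun x => tendsto_iff_norm_sub_tendsto_zero.2 (hT x)) hcc).totallyBounded_iUnion_image
      (fun n => hcc.image (T n).uniformContinuous) (hcc.image T₀.uniformContinuous)
    rintro _ ⟨n, K, hK, x, hx, rfl⟩
    exact Set.mem_iUnion.2 ⟨n, K x, ⟨K, hK, x, hx, rfl⟩, rfl⟩
  · obtain ⟨C, hC⟩ := ContinuousLinearMap.exists_norm_le_of_tendsto
      fun x => tendsto_iff_norm_sub_tendsto_zero.2 (hS x)
    refine (totallyBounded_apply_of_norm_le hcc (C * 1)).subset ?_
    rintro _ ⟨n, K, hK, x, hx, rfl⟩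
    exact ⟨K, hK, S n x, (S n).le_of_opNorm_le_of_le (hC n) hx, rfl⟩

/-- Composing a collectively compact family `𝒦` with a strongly convergent sequence of
operators (either on the left or on the right) yields a collectively compact family. -/
theorem comp_collectively_compact
    {Hm1 H₀ H₁ H₂ : Type*}
    [NormedAddCommGroup Hm1] [InnerProductSpace ℂ Hm1] [CompleteSpace Hm1]
    [NormedAddCommGroup H₀] [InnerProductSpace ℂ H₀] [CompleteSpace H₀]
    [NormedAddCommGroup H₁] [InnerProductSpace ℂ H₁] [CompleteSpace H₁]
    [NormedAddCommGroup H₂] [InnerProductSpace ℂ H₂] [CompleteSpace H₂]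
    (𝒦 : Set (H₀ →L[ℂ] H₁))
    (hcc : TotallyBounded {y : H₁ | ∃ K ∈ 𝒦, ∃ x : H₀, ‖x‖ ≤ 1 ∧ y = K x})
    (T : ℕ → H₁ →L[ℂ] H₂) (T₀ : H₁ →L[ℂ] H₂)
    (hT : ∀ x : H₁, Tendsto (fun n => ‖T n x - T₀ x‖) atTop (nhds 0))
    (S : ℕ → Hm1 →L[ℂ] H₀) (S₀ : Hm1 →L[ℂ] H₀)
    (hS : ∀ x : Hm1, Tendsto (fun n => ‖S n x - S₀ x‖) atTop (nhds 0)) :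
    TotallyBounded {y : H₂ | ∃ n : ℕ, ∃ K ∈ 𝒦, ∃ x : H₀, ‖x‖ ≤ 1 ∧ y = T n (K x)} ∧
    TotallyBounded {y : H₁ | ∃ n : ℕ, ∃ K ∈ 𝒦, ∃ x : Hm1, ‖x‖ ≤ 1 ∧ y = K (S n x)} :=
  comp_collectively_compact_general 𝒦 hcc T T₀ hT S S₀ hS
end

section
/- Let H₀ and H₁ be complex Hilbert spaces and let (T_n)_{n∈ℕ} be a sequence of compact continuous linear operators from H₀ to H₁ such that: (i) the family {T_n : n ∈ ℕ} is collectively compact; (ii) T_n converges strongly to a continuous linear operator T₀ : H₀ → H₁; and (iii) whenever a sequence (u_n) in H₀ converges weakly to some u ∈ H₀, there exists a subsequence (u_{n_k}) such that ‖T_{n_k} u_{n_k} − T₀ u‖ → 0. Then the sequence (T_n* ∘ T_n) inherits the same continuity property: whenever a sequence (v_n) in H₀ converges weakly to some v₀ ∈ H₀, there exists a subsequence (v_{n_k}) such that ‖T_{n_k}* T_{n_k} v_{n_k} − T₀* T₀ v₀‖ → 0. -/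
/-!
Put `y = T₀ v₀` and `gₙ = Tₙ* y - T₀* y`. Since `⟪gₙ, h⟫ = ⟪y, (Tₙ - T₀) h⟫`, strong convergence
gives `gₙ ⇀ 0`. Adding to `vₙ` a bounded multiple of `gₙ` wherever `‖gₙ‖ ≥ ε`, chosen so that
`‖⟪gₙ, uₙ⟫‖ ≥ ‖gₙ‖` there, keeps the weak limit `v₀`. Along a subsequence with `Tₙ uₙ → T₀ v₀`
the pairing `⟪gₙ, uₙ⟫ = ⟪y, Tₙ uₙ⟫ - ⟪T₀* y, uₙ⟫` tends to `0`, so eventually `‖gₙ‖ < ε`,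
`uₙ = vₙ` and `‖Tₙ vₙ - T₀ v₀‖ < ε`. Thus `(T₀ v₀, T₀* y)` is a cluster point of `(Tₙ vₙ, Tₙ* y)`,
and along a subsequence converging to it `Tₙ* Tₙ vₙ = Tₙ* (Tₙ vₙ - y) + Tₙ* y → T₀* y`, the norms
`‖Tₙ‖` being uniformly bounded by Banach–Steinhaus.
-/

open Filter ContinuousLinearMap Metric Topology
open scoped InnerProductSpace

section Normed

variable {𝕜 E F : Type*} [NontriviallyNormedField 𝕜] [NormedAddCommGroup E] [NormedSpace 𝕜 E]
  [NormedAddCommGroup F] [NormedSpace 𝕜 F]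

theorem exists_norm_le_of_tendsto_apply [CompleteSpace E] {T : ℕ → E →L[𝕜] F} {T₀ : E →L[𝕜] F}
    (hT : ∀ x, Tendsto (fun n => T n x) atTop (𝓝 (T₀ x))) : ∃ C, ∀ n, ‖T n‖ ≤ C :=
  banach_steinhaus fun x => by
    obtain ⟨C, hC⟩ := (hT x).norm.bddAbove_range
    exact ⟨C, fun n => hC ⟨n, rfl⟩⟩

theorem tendsto_apply_of_norm_le {ι : Type*} {l : Filter ι} {A : ι → E →L[𝕜] F} {C : ℝ}
    (hA : ∀ i, ‖A i‖ ≤ C) {x : ι → E} {x₀ : E} {z : F} (hx : Tendsto x l (𝓝 x₀))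
    (hAx : Tendsto (fun i => A i x₀) l (𝓝 z)) : Tendsto (fun i => A i (x i)) l (𝓝 z) := by
  have hsub : Tendsto (fun i => A i (x i - x₀)) l (𝓝 0) := by
    refine squeeze_zero_norm (fun i => (A i).le_of_opNorm_le (hA i) _) ?_
    simpa using (tendsto_iff_norm_sub_tendsto_zero.1 hx).const_mul C
  simpa using hsub.add hAx

end Normed

section InnerProduct

variable {𝕜 E F : Type*} [RCLike 𝕜] [NormedAddCommGroup E] [InnerProductSpace 𝕜 E]
  [NormedAddCommGroup F] [InnerProductSpace 𝕜 F]

variable (𝕜) in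
def WeakTendsto (u : ℕ → E) (u₀ : E) : Prop :=
  ∀ y, Tendsto (fun n => ⟪u n, y⟫_𝕜) atTop (𝓝 ⟪u₀, y⟫_𝕜)

variable (𝕜) in
def WeakToNormSubseqContinuous (T : ℕ → E →L[𝕜] F) (T₀ : E →L[𝕜] F) : Prop :=
  ∀ (u : ℕ → E) (u₀ : E), WeakTendsto 𝕜 u u₀ →
    ∃ φ : ℕ → ℕ, StrictMono φ ∧ Tendsto (fun k => T (φ k) (u (φ k))) atTop (𝓝 (T₀ u₀))

namespace WeakTendsto

theorem add {u v : ℕ → E} {u₀ v₀ : E} (hu : WeakTendsto 𝕜 u u₀) (hv : WeakTendsto 𝕜 v v₀) :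
    WeakTendsto 𝕜 (fun n => u n + v n) (u₀ + v₀) := fun y => by
  simpa only [inner_add_left] using (hu y).add (hv y)

theorem smul_of_norm_le {g : ℕ → E} {c : ℕ → 𝕜} {K : ℝ} (hg : WeakTendsto 𝕜 g 0)
    (hc : ∀ n, ‖c n‖ ≤ K) : WeakTendsto 𝕜 (fun n => c n • g n) 0 := fun y => by
  have hgy : Tendsto (fun n => ⟪g n, y⟫_𝕜) atTop (𝓝 0) := by simpa using hg y
  rw [inner_zero_left]
  refine squeeze_zero_norm (fun n => ?_) (by simpa using hgy.norm.const_mul K)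
  rw [inner_smul_left, norm_mul, RCLike.norm_conj]
  exact mul_le_mul_of_nonneg_right (hc n) (norm_nonneg _)

theorem tendsto_inner_right {u : ℕ → E} {u₀ : E} (hu : WeakTendsto 𝕜 u u₀) (x : E) :
    Tendsto (fun n => ⟪x, u n⟫_𝕜) atTop (𝓝 ⟪x, u₀⟫_𝕜) := by
  simpa only [Function.comp_def, inner_conj_symm] using
    ((RCLike.continuous_conj (K := 𝕜)).tendsto _).comp (hu x)

theorem exists_norm_le [CompleteSpace E] {u : ℕ → E} {u₀ : E} (hu : WeakTendsto 𝕜 u u₀) :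
    ∃ V, ∀ n, ‖u n‖ ≤ V := by
  obtain ⟨V, hV⟩ := banach_steinhaus (g := fun n => innerSL 𝕜 (u n)) fun y => by
    obtain ⟨V, hV⟩ := (hu y).norm.bddAbove_range
    exact ⟨V, fun n => hV ⟨n, rfl⟩⟩
  exact ⟨V, fun n => by simpa only [innerSL_apply_norm] using hV n⟩

end WeakTendsto

theorem weakTendsto_adjoint_apply_sub [CompleteSpace E] [CompleteSpace F] {T : ℕ → E →L[𝕜] F}
    {T₀ : E →L[𝕜] F} (hT : ∀ x, Tendsto (fun n => T n x) atTop (𝓝 (T₀ x))) (y : F) :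
    WeakTendsto 𝕜 (fun n => adjoint (T n) y - adjoint T₀ y) 0 := fun x => by
  simp only [inner_sub_left, adjoint_inner_left, inner_zero_left]
  simpa using (tendsto_const_nhds (x := y)).inner (hT x) |>.sub_const ⟪y, T₀ x⟫_𝕜

theorem norm_le_norm_inner_add_smul {g v : E} {V : ℝ} (hv : ‖v‖ ≤ V) (hg : g ≠ 0) :
    ‖g‖ ≤ ‖⟪g, v + (((V + 1) / ‖g‖ : ℝ) : 𝕜) • g⟫_𝕜‖ := by
  have hg₀ : 0 < ‖g‖ := norm_pos_iff.2 hg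
  have hV : 0 ≤ V + 1 := by linarith [norm_nonneg v]
  have hexpand : ⟪g, v + (((V + 1) / ‖g‖ : ℝ) : 𝕜) • g⟫_𝕜
      = ⟪g, v⟫_𝕜 + (((V + 1) * ‖g‖ : ℝ) : 𝕜) := by
    rw [inner_add_right, inner_smul_right, inner_self_eq_norm_sq_to_K]
    push_cast
    field_simp
  have htriangle := norm_sub_le (⟪g, v⟫_𝕜 + (((V + 1) * ‖g‖ : ℝ) : 𝕜)) ⟪g, v⟫_𝕜
  rw [add_sub_cancel_left, RCLike.norm_ofReal, abs_of_nonneg (by positivity)] at htriangle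
  have hcross : ‖⟪g, v⟫_𝕜‖ ≤ ‖g‖ * V :=
    (norm_inner_le_norm g v).trans (mul_le_mul_of_nonneg_left hv hg₀.le)
  rw [hexpand]
  linarith

section Adjoint

variable [CompleteSpace E] [CompleteSpace F] {T : ℕ → E →L[𝕜] F} {T₀ : E →L[𝕜] F}

theorem WeakToNormSubseqContinuous.frequently_apply_mem_ball_and_adjoint_apply_mem_ball
    (hweak : WeakToNormSubseqContinuous 𝕜 T T₀)
    (hstrong : ∀ x, Tendsto (fun n => T n x) atTop (𝓝 (T₀ x)))
    {v : ℕ → E} {v₀ : E} (hv : WeakTendsto 𝕜 v v₀) (y : F) {ε : ℝ} (hε : 0 < ε) :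
    ∃ᶠ n in atTop, T n (v n) ∈ ball (T₀ v₀) ε ∧ adjoint (T n) y ∈ ball (adjoint T₀ y) ε := by
  set g : ℕ → E := fun n => adjoint (T n) y - adjoint T₀ y
  obtain ⟨V, hV⟩ := hv.exists_norm_le
  set c : ℕ → 𝕜 := fun n => if ε ≤ ‖g n‖ then (((V + 1) / ‖g n‖ : ℝ) : 𝕜) else 0
  set u : ℕ → E := fun n => v n + c n • g n
  have hV₀ : 0 ≤ V + 1 := by linarith [norm_nonneg (v 0), hV 0]
  have hc : ∀ n, ‖c n‖ ≤ (V + 1) / ε := by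
    intro n
    by_cases hn : ε ≤ ‖g n‖
    · simp only [c, if_pos hn, RCLike.norm_ofReal]
      rw [abs_of_nonneg (by positivity)]
      exact div_le_div_of_nonneg_left hV₀ hε hn
    · simp only [c, if_neg hn, norm_zero]
      positivity
  have hu : WeakTendsto 𝕜 u v₀ := by
    have h := hv.add ((weakTendsto_adjoint_apply_sub hstrong y).smul_of_norm_le hc)
    rwa [add_zero] at h
  obtain ⟨ρ, hρ, hTu⟩ := hweak u v₀ hu
  have hpair : Tendsto (fun k => ⟪g (ρ k), u (ρ k)⟫_𝕜) atTop (𝓝 0) := by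
    have h₁ := (tendsto_const_nhds (x := y)).inner (𝕜 := 𝕜) hTu
    have h₂ := (hu.tendsto_inner_right (adjoint T₀ y)).comp hρ.tendsto_atTop
    simpa [g, inner_sub_left, adjoint_inner_left] using h₁.sub h₂
  have hsmall : ∀ᶠ k in atTop, ¬ ε ≤ ‖g (ρ k)‖ :=
    (hpair.norm.eventually_lt_const (by simpa using hε)).mono fun k hk hle => by
      have hg : g (ρ k) ≠ 0 := norm_pos_iff.1 (hε.trans_le hle)
      have := norm_le_norm_inner_add_smul (𝕜 := 𝕜) (hV (ρ k)) hg
      simp only [u, c, if_pos hle] at hk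
      linarith
  refine hρ.tendsto_atTop.frequently (Eventually.frequently ?_)
  filter_upwards [hsmall, hTu.eventually (ball_mem_nhds _ hε)] with k hsmall hball
  have hcu : u (ρ k) = v (ρ k) := by simp [u, c, if_neg hsmall]
  exact ⟨hcu ▸ hball, mem_ball_iff_norm.2 (not_le.1 hsmall)⟩

theorem WeakToNormSubseqContinuous.mapClusterPt_apply_adjoint_apply
    (hweak : WeakToNormSubseqContinuous 𝕜 T T₀)
    (hstrong : ∀ x, Tendsto (fun n => T n x) atTop (𝓝 (T₀ x)))
    {v : ℕ → E} {v₀ : E} (hv : WeakTendsto 𝕜 v v₀) (y : F) :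
    MapClusterPt (T₀ v₀, adjoint T₀ y) atTop (fun n => (T n (v n), adjoint (T n) y)) := by
  rw [mapClusterPt_iff_frequently]
  intro s hs
  obtain ⟨ε, hε, hball⟩ := Metric.mem_nhds_iff.1 hs
  rw [← ball_prod_same] at hball
  exact (hweak.frequently_apply_mem_ball_and_adjoint_apply_mem_ball hstrong hv y hε).mono
    fun n hn => hball hn

theorem WeakToNormSubseqContinuous.adjoint_comp (hweak : WeakToNormSubseqContinuous 𝕜 T T₀)
    (hstrong : ∀ x, Tendsto (fun n => T n x) atTop (𝓝 (T₀ x))) :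
    WeakToNormSubseqContinuous 𝕜 (fun n => adjoint (T n) ∘L T n) (adjoint T₀ ∘L T₀) := by
  intro v v₀ hv
  obtain ⟨C, hC⟩ := exists_norm_le_of_tendsto_apply hstrong
  obtain ⟨φ, hφ, hlim⟩ :=
    (hweak.mapClusterPt_apply_adjoint_apply hstrong hv (T₀ v₀)).tendsto_subseq
  have hadj_norm k : ‖adjoint (T (φ k))‖ ≤ C :=
    (LinearIsometryEquiv.norm_map _ _).trans_le (hC _)
  exact ⟨φ, hφ, tendsto_apply_of_norm_le hadj_norm hlim.fst_nhds hlim.snd_nhds⟩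

end Adjoint

end InnerProduct

theorem adjoint_comp_inherits_continuity_general
    {H₀ H₁ : Type*} [NormedAddCommGroup H₀] [InnerProductSpace ℂ H₀] [CompleteSpace H₀]
    [NormedAddCommGroup H₁] [InnerProductSpace ℂ H₁] [CompleteSpace H₁]
    (T : ℕ → H₀ →L[ℂ] H₁) (T₀ : H₀ →L[ℂ] H₁)
    (hstrong : ∀ x : H₀, Tendsto (fun n => ‖T n x - T₀ x‖) atTop (nhds 0))
    (hweak : ∀ (u : ℕ → H₀) (u₀ : H₀),
      (∀ y : H₀, Tendsto (fun n => (inner ℂ (u n) y : ℂ)) atTop (nhds (inner ℂ u₀ y))) →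
      ∃ φ : ℕ → ℕ, StrictMono φ ∧
        Tendsto (fun k => ‖T (φ k) (u (φ k)) - T₀ u₀‖) atTop (nhds 0)) :
    ∀ (v : ℕ → H₀) (v₀ : H₀),
      (∀ y : H₀, Tendsto (fun n => (inner ℂ (v n) y : ℂ)) atTop (nhds (inner ℂ v₀ y))) →
      ∃ φ : ℕ → ℕ, StrictMono φ ∧
        Tendsto (fun k => ‖adjoint (T (φ k)) (T (φ k) (v (φ k))) - adjoint T₀ (T₀ v₀)‖)
          atTop (nhds 0) := by
  have hweak' : WeakToNormSubseqContinuous ℂ T T₀ := fun u u₀ hu =>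
    (hweak u u₀ hu).imp fun _ ⟨hφ, hlim⟩ => ⟨hφ, tendsto_iff_norm_sub_tendsto_zero.2 hlim⟩
  have hstrong' x := tendsto_iff_norm_sub_tendsto_zero.2 (hstrong x)
  intro v v₀ hv
  obtain ⟨φ, hφ, hlim⟩ := hweak'.adjoint_comp hstrong' v v₀ hv
  exact ⟨φ, hφ, tendsto_iff_norm_sub_tendsto_zero.1 hlim⟩

/-- If `(Tₙ)` is a collectively compact sequence of compact operators between complex
Hilbert spaces converging strongly to `T₀` and mapping weakly convergent sequences to
(subsequentially) norm convergent sequences, then `(Tₙ* ∘ Tₙ)` inherits the same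
continuity property with limit operator `T₀* ∘ T₀`. -/
theorem adjoint_comp_inherits_continuity
    {H₀ H₁ : Type*} [NormedAddCommGroup H₀] [InnerProductSpace ℂ H₀] [CompleteSpace H₀]
    [NormedAddCommGroup H₁] [InnerProductSpace ℂ H₁] [CompleteSpace H₁]
    (T : ℕ → H₀ →L[ℂ] H₁) (T₀ : H₀ →L[ℂ] H₁)
    (hcomp : ∀ n, IsCompactOperator (T n))
    (hcc : TotallyBounded {y : H₁ | ∃ n : ℕ, ∃ x : H₀, ‖x‖ ≤ 1 ∧ y = T n x})
    (hstrong : ∀ x : H₀, Tendsto (fun n => ‖T n x - T₀ x‖) atTop (nhds 0))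
    (hweak : ∀ (u : ℕ → H₀) (u₀ : H₀),
      (∀ y : H₀, Tendsto (fun n => (inner ℂ (u n) y : ℂ)) atTop (nhds (inner ℂ u₀ y))) →
      ∃ φ : ℕ → ℕ, StrictMono φ ∧
        Tendsto (fun k => ‖T (φ k) (u (φ k)) - T₀ u₀‖) atTop (nhds 0)) :
    ∀ (v : ℕ → H₀) (v₀ : H₀),
      (∀ y : H₀, Tendsto (fun n => (inner ℂ (v n) y : ℂ)) atTop (nhds (inner ℂ v₀ y))) →
      ∃ φ : ℕ → ℕ, StrictMono φ ∧
        Tendsto (fun k => ‖adjoint (T (φ k)) (T (φ k) (v (φ k))) - adjoint T₀ (T₀ v₀)‖)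
          atTop (nhds 0) :=
  adjoint_comp_inherits_continuity_general T T₀ hstrong hweak
end

section
/- Let H₀ and H₁ be complex Hilbert spaces, let E : H₀ → H₁, B₁ : H₁ → H₁, B₀ : H₀ → H₀, P¹ : H₁ → H₁, P⁰ : H₀ → H₀ be continuous linear operators, let λ₁, λ₀ ∈ ℂ with λ₀ ≠ 0, and let c ≥ 0. Assume: (i) P¹ ∘ E = λ₁ • (B₁ ∘ P¹ ∘ E); (ii) B₀ ∘ P⁰ = λ₀⁻¹ • P⁰; (iii) ‖P¹ ∘ E − E ∘ P⁰‖ ≤ c; (iv) ‖B₁ ∘ E − E ∘ B₀‖ ≤ c; (v) ‖P⁰‖ ≤ 1; and (vi) E ∘ P⁰ ≠ 0. Then |λ₁ − λ₀| ≤ c · |λ₀| · (1 + |λ₁| + |λ₁| · ‖B₁‖) / ‖E ∘ P⁰‖. -/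
open ContinuousLinearMap

/-
With `D = P¹E − EP⁰` and `R = B₁E − EB₀`, the two eigen-relations give the exact identity
`(λ₀ − λ₁) EP⁰ = λ₀ (λ₁ R P⁰ + λ₁ B₁ D − D)`, whose right-hand side has norm at most
`c |λ₀| (1 + |λ₁| + |λ₁| ‖B₁‖)`; dividing by `‖EP⁰‖ ≠ 0` gives the estimate.
-/

section

variable {𝕜 V₀ V₁ : Type*} [NontriviallyNormedField 𝕜]
  [SeminormedAddCommGroup V₀] [NormedSpace 𝕜 V₀] [SeminormedAddCommGroup V₁] [NormedSpace 𝕜 V₁]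

theorem sub_smul_comp_eq_of_eigen {E : V₀ →L[𝕜] V₁} {B₁ P₁ : V₁ →L[𝕜] V₁}
    {B₀ P₀ : V₀ →L[𝕜] V₀} {μ₁ μ₀ : 𝕜} (hμ₀ : μ₀ ≠ 0)
    (h₁ : P₁ ∘L E = μ₁ • (B₁ ∘L P₁ ∘L E)) (h₀ : B₀ ∘L P₀ = μ₀⁻¹ • P₀) :
    (μ₀ - μ₁) • (E ∘L P₀) = μ₀ • (μ₁ • ((B₁ ∘L E - E ∘L B₀) ∘L P₀)
      + μ₁ • (B₁ ∘L (P₁ ∘L E - E ∘L P₀)) - (P₁ ∘L E - E ∘L P₀)) := by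
  have h₀' : E ∘L B₀ ∘L P₀ = μ₀⁻¹ • (E ∘L P₀) := by rw [h₀, comp_smul]
  simp only [comp_sub, sub_comp, comp_assoc]
  linear_combination (norm := (match_scalars <;> field_simp <;> ring))
    μ₀ • h₁ + (μ₀ * μ₁) • h₀'

theorem norm_smul_comp_add_smul_comp_sub_le {R D : V₀ →L[𝕜] V₁} {P : V₀ →L[𝕜] V₀}
    {B : V₁ →L[𝕜] V₁} (μ : 𝕜) {c : ℝ} (hR : ‖R‖ ≤ c) (hD : ‖D‖ ≤ c) (hP : ‖P‖ ≤ 1) :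
    ‖μ • (R ∘L P) + μ • (B ∘L D) - D‖ ≤ c * (1 + ‖μ‖ + ‖μ‖ * ‖B‖) := by
  have hRP : ‖R ∘L P‖ ≤ c :=
    (opNorm_comp_le R P).trans <| by nlinarith [norm_nonneg R, norm_nonneg P]
  have hBD : ‖B ∘L D‖ ≤ ‖B‖ * c :=
    (opNorm_comp_le B D).trans (mul_le_mul_of_nonneg_left hD (norm_nonneg B))
  calc ‖μ • (R ∘L P) + μ • (B ∘L D) - D‖
      ≤ ‖μ‖ * ‖R ∘L P‖ + ‖μ‖ * ‖B ∘L D‖ + ‖D‖ := by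
        refine (norm_sub_le _ _).trans (add_le_add_left ((norm_add_le _ _).trans ?_) _)
        exact add_le_add (opNorm_smul_le _ _) (opNorm_smul_le _ _)
    _ ≤ ‖μ‖ * c + ‖μ‖ * (‖B‖ * c) + c := by gcongr
    _ = c * (1 + ‖μ‖ + ‖μ‖ * ‖B‖) := by ring

end

theorem eigenvalue_rate_estimate_general
    {H₀ H₁ : Type*} [NormedAddCommGroup H₀] [InnerProductSpace ℂ H₀]
    [NormedAddCommGroup H₁] [InnerProductSpace ℂ H₁]
    (E : H₀ →L[ℂ] H₁) (B₁ : H₁ →L[ℂ] H₁) (B₀ : H₀ →L[ℂ] H₀)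
    (P₁ : H₁ →L[ℂ] H₁) (P₀ : H₀ →L[ℂ] H₀) (μ₁ μ₀ : ℂ) (hμ₀ : μ₀ ≠ 0)
    (c : ℝ)
    (h₁ : P₁ ∘L E = μ₁ • (B₁ ∘L P₁ ∘L E))
    (h₀ : B₀ ∘L P₀ = μ₀⁻¹ • P₀)
    (hproj : ‖P₁ ∘L E - E ∘L P₀‖ ≤ c)
    (hres : ‖B₁ ∘L E - E ∘L B₀‖ ≤ c)
    (hP₀ : ‖P₀‖ ≤ 1)
    (hEP₀ : E ∘L P₀ ≠ 0) :
    ‖μ₁ - μ₀‖ ≤ c * ‖μ₀‖ * (1 + ‖μ₁‖ + ‖μ₁‖ * ‖B₁‖) / ‖E ∘L P₀‖ := by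
  rw [le_div_iff₀ (norm_pos_iff.mpr hEP₀), norm_sub_rev, ← norm_smul,
    sub_smul_comp_eq_of_eigen hμ₀ h₁ h₀, mul_comm c, mul_assoc]
  exact (opNorm_smul_le _ _).trans <| mul_le_mul_of_nonneg_left
    (norm_smul_comp_add_smul_comp_sub_le μ₁ hres hproj hP₀) (norm_nonneg μ₀)

/-- Eigenvalue rate-of-convergence estimate: if `P¹ ∘ E = μ₁ • (B₁ ∘ P¹ ∘ E)`,
`B₀ ∘ P⁰ = μ₀⁻¹ • P⁰`, the projections and resolvents are `c`-close after intertwining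
with `E`, `‖P⁰‖ ≤ 1` and `E ∘ P⁰ ≠ 0`, then
`|μ₁ − μ₀| ≤ c |μ₀| (1 + |μ₁| + |μ₁| ‖B₁‖) / ‖E ∘ P⁰‖`. -/
theorem eigenvalue_rate_estimate
    {H₀ H₁ : Type*} [NormedAddCommGroup H₀] [InnerProductSpace ℂ H₀] [CompleteSpace H₀]
    [NormedAddCommGroup H₁] [InnerProductSpace ℂ H₁] [CompleteSpace H₁]
    (E : H₀ →L[ℂ] H₁) (B₁ : H₁ →L[ℂ] H₁) (B₀ : H₀ →L[ℂ] H₀)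
    (P₁ : H₁ →L[ℂ] H₁) (P₀ : H₀ →L[ℂ] H₀) (μ₁ μ₀ : ℂ) (hμ₀ : μ₀ ≠ 0)
    (c : ℝ) (hc : 0 ≤ c)
    (h₁ : P₁ ∘L E = μ₁ • (B₁ ∘L P₁ ∘L E))
    (h₀ : B₀ ∘L P₀ = μ₀⁻¹ • P₀)
    (hproj : ‖P₁ ∘L E - E ∘L P₀‖ ≤ c)
    (hres : ‖B₁ ∘L E - E ∘L B₀‖ ≤ c)
    (hP₀ : ‖P₀‖ ≤ 1)
    (hEP₀ : E ∘L P₀ ≠ 0) :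
    ‖μ₁ - μ₀‖ ≤ c * ‖μ₀‖ * (1 + ‖μ₁‖ + ‖μ₁‖ * ‖B₁‖) / ‖E ∘L P₀‖ :=
  eigenvalue_rate_estimate_general E B₁ B₀ P₁ P₀ μ₁ μ₀ hμ₀ c h₁ h₀ hproj hres hP₀ hEP₀
end
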